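/- arXiv:2601.13552 — 2 statements merged into one kernel-verified Lean document; each statement's English description precedes it below -/
import Mathlib

section
/- Let G be a finite simple bipartite graph and let T be an optimal tetragonal subgraph of G with |V(T)| = 2m ≥ 6, and set R := {v ∈ V(G) \ V(T) : v has at least m − 1 neighbors in V(T)}. Then for every vertex v of G lying outside V(T) ∪ R, exactly one of the following holds: (i) v has no neighbor in R and at most m − 2 neighbors in V(T); (ii) v has exactly one neighbor in R and no neighbor in V(T). -/
open SimpleGraph

namespace Dean

variable {V : Type*}

noncomputable def degN (G : SimpleGraph V) (v : V) : ℕ := (G.neighborSet v).ncard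

def HasCycleMod (G : SimpleGraph V) (k : ℕ) (r : ℤ) : Prop :=
  ∃ (v : V) (c : G.Walk v v), c.IsCycle ∧ (k : ℤ) ∣ ((c.length : ℤ) - r)

def HasConsecutiveCycles (G : SimpleGraph V) (k : ℕ) : Prop :=
  ∃ a : ℕ, ∀ i < k, ∃ (v : V) (c : G.Walk v v), c.IsCycle ∧ c.length = a + i

def HasAdmissibleCycles (G : SimpleGraph V) (k : ℕ) : Prop :=
  ∃ a d : ℕ, (d = 1 ∨ d = 2) ∧
    ∀ i < k, ∃ (v : V) (c : G.Walk v v), c.IsCycle ∧ c.length = a + d * i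

/-- `HGraph k n t` : complete bipartite `K_{k,n}` minus `k - t` edges at the vertex
`Sum.inr 0` of the part of size `n`, so that this vertex keeps exactly `t` neighbours. -/
def HGraph (k n t : ℕ) : SimpleGraph (Fin k ⊕ Fin n) :=
  SimpleGraph.fromRel fun x y =>
    ∃ (i : Fin k) (j : Fin n), x = Sum.inl i ∧ y = Sum.inr j ∧ (j.val ≠ 0 ∨ i.val < t)

def IsKkplus1 (k : ℕ) (G : SimpleGraph V) : Prop :=
  Nonempty (G ≃g completeGraph (Fin (k + 1)))

def IsKkk (k : ℕ) (G : SimpleGraph V) : Prop :=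
  Nonempty (G ≃g completeBipartiteGraph (Fin k) (Fin k))

def IsHGraph (k : ℕ) (G : SimpleGraph V) : Prop :=
  ∃ n t, 2 ≤ t ∧ t ≤ k ∧ k < n ∧ Nonempty (G ≃g HGraph k n t)

def IsExceptional (k : ℕ) (G : SimpleGraph V) : Prop :=
  IsKkplus1 k G ∨ IsKkk k G ∨ IsHGraph k G

def IsBipExceptional (k : ℕ) (G : SimpleGraph V) : Prop :=
  IsKkk k G ∨ IsHGraph k G

def IsCutVertex (G : SimpleGraph V) (v : V) : Prop :=
  ∃ (a b : V) (ha : a ≠ v) (hb : b ≠ v), G.Reachable a b ∧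
    ¬ (G.induce {u : V | u ≠ v}).Reachable ⟨a, ha⟩ ⟨b, hb⟩

def NoCutVtxIn (G : SimpleGraph V) (B : Set V) : Prop :=
  ∀ v ∈ B, B = {v} ∨ (G.induce (B \ {v})).Connected

def IsBlockSet (G : SimpleGraph V) (B : Set V) : Prop :=
  (G.induce B).Connected ∧ NoCutVtxIn G B ∧
    ∀ B' : Set V, B ⊆ B' → (G.induce B').Connected → NoCutVtxIn G B' → B' = B

def IsEndBlock (G : SimpleGraph V) (B : Set V) : Prop :=
  IsBlockSet G B ∧ {v | v ∈ B ∧ IsCutVertex G v}.Subsingleton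

def IsThreeConnected (G : SimpleGraph V) : Prop :=
  4 ≤ Nat.card V ∧ ∀ S : Set V, S.ncard ≤ 2 → (G.induce (Sᶜ : Set V)).Connected

def IsTwoConnected (G : SimpleGraph V) : Prop :=
  3 ≤ Nat.card V ∧ ∀ v : V, (G.induce ({v}ᶜ : Set V)).Connected

def TypeOne (k : ℕ) (G : SimpleGraph V) : Prop :=
  IsThreeConnected G ∧ {v : V | degN G v < k}.Subsingleton

/-- the graph `G - θ + θ₁θ₂`. -/
def modGraph (G : SimpleGraph V) (θ θ₁ θ₂ : V) (h₁ : θ₁ ≠ θ) (h₂ : θ₂ ≠ θ) :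
    SimpleGraph ↥{u : V | u ≠ θ} :=
  (G.induce {u : V | u ≠ θ}) ⊔ SimpleGraph.fromEdgeSet {s(⟨θ₁, h₁⟩, ⟨θ₂, h₂⟩)}

def TypeTwo (k : ℕ) (G : SimpleGraph V) (θ θ₁ θ₂ : V) : Prop :=
  degN G θ = 2 ∧ (∀ v, degN G v = 2 → v = θ) ∧
  G.Adj θ θ₁ ∧ G.Adj θ θ₂ ∧ θ₁ ≠ θ₂ ∧
  ∃ (h₁ : θ₁ ≠ θ) (h₂ : θ₂ ≠ θ),
    IsThreeConnected (modGraph G θ θ₁ θ₂ h₁ h₂) ∧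
    ∀ v, k ≤ degN (modGraph G θ θ₁ θ₂ h₁ h₂) v

def IsKWeak (k : ℕ) (G : SimpleGraph V) : Prop :=
  TypeOne k G ∨ ∃ θ θ₁ θ₂, TypeTwo k G θ θ₁ θ₂

inductive IsTrigonal : SimpleGraph V → SimpleGraph V → Set V → Prop
  | base (a b c : V) (hab : a ≠ b) (hbc : b ≠ c) (hac : a ≠ c) :
      IsTrigonal (SimpleGraph.fromEdgeSet {s(a, b), s(b, c), s(a, c)})
        (SimpleGraph.fromEdgeSet {s(a, b), s(b, c), s(a, c)}) {a, b, c}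
  | extend (T B : SimpleGraph V) (S : Set V) (a b x : V)
      (h : IsTrigonal T B S) (hx : x ∉ S) (hab : B.Adj a b) :
      IsTrigonal (T ⊔ SimpleGraph.fromEdgeSet {s(a, x), s(x, b)})
        (B.deleteEdges {s(a, b)} ⊔ SimpleGraph.fromEdgeSet {s(a, x), s(x, b)})
        (insert x S)

inductive IsTetragonal : SimpleGraph V → SimpleGraph V → Set V → Prop
  | base (a b c d : V) (hab : a ≠ b) (hac : a ≠ c) (had : a ≠ d)
      (hbc : b ≠ c) (hbd : b ≠ d) (hcd : c ≠ d) :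
      IsTetragonal (SimpleGraph.fromEdgeSet {s(a, b), s(b, c), s(c, d), s(d, a)})
        (SimpleGraph.fromEdgeSet {s(a, b), s(b, c), s(c, d), s(d, a)}) {a, b, c, d}
  | extend (T B : SimpleGraph V) (S : Set V) (a b x y : V)
      (h : IsTetragonal T B S) (hx : x ∉ S) (hy : y ∉ S) (hxy : x ≠ y) (hab : B.Adj a b) :
      IsTetragonal (T ⊔ SimpleGraph.fromEdgeSet {s(a, x), s(x, y), s(y, b)})
        (B.deleteEdges {s(a, b)} ⊔ SimpleGraph.fromEdgeSet {s(a, x), s(x, y), s(y, b)})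
        (insert x (insert y S))

def IsTetragonalSubgraph (G T B : SimpleGraph V) (S : Set V) : Prop :=
  IsTetragonal T B S ∧ T ≤ G

def IsOptimalTetragonal (G T B : SimpleGraph V) (S : Set V) : Prop :=
  IsTetragonalSubgraph G T B S ∧
  (∀ (T' B' : SimpleGraph V) (S' : Set V),
    IsTetragonalSubgraph G T' B' S' → S'.ncard ≤ S.ncard) ∧
  (∀ (T' B' : SimpleGraph V) (S' : Set V),
    IsTetragonalSubgraph G T' B' S' → S'.ncard = S.ncard →
      (G.induce S').edgeSet.ncard ≤ (G.induce S).edgeSet.ncard)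


/-!
Fix a proper 2-colouring `c` of `G`. Every edge of a tetragonal graph joins the two colours, so
each colour class of `V(T)` has `m` vertices; hence a vertex `w ∈ R` adjacent to `v` is adjacent
to every vertex of `V(T)` of the colour of `v`, except possibly one vertex `e_w`. Each case is
refuted by a tetragonal subgraph of order `2m + 2`, built by adding ears: paths `a x y b` through
two new vertices, glued onto a boundary edge `ab`.

If `v` has a neighbour `s ∈ V(T)` besides its neighbour `w ∈ R`, then one of the two boundary
neighbours `z` of `s` differs from `e_w`, and the ear `s v w z` extends `T`.

If `v` has two neighbours `w₁, w₂ ∈ R`, and some vertex `a` of the other colour has all its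
`T`-neighbours adjacent to `w₁`, then swapping `a` for `w₁` and adding the ear `w₁ v w₂ z`
extends `T`. So `e_{w₁}` is `T`-adjacent to the whole other colour class, which has at least three
vertices. If `r f g q` is the last ear of `T`, with `f` of the colour of `v`, the vertices `f, g`
have degree two in `T`, which forces `e_{w₁} = e_{w₂} = q`. Then `T - f - g` together with the
ears `r f w₁ t` and `w₁ v w₂ t`, where `t ≠ q` is a boundary neighbour of `r`, has order `2m + 2`.
-/

theorem fin_two_eq_of_ne_of_ne {a b c : Fin 2} (hab : a ≠ b) (hbc : b ≠ c) : a = c := by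
  revert a b c
  decide

theorem coloring_eq_iff_ne_of_adj {G : SimpleGraph V} (c : G.Coloring (Fin 2)) {u w : V}
    (huw : G.Adj u w) (i : Fin 2) : c u = i ↔ c w ≠ i :=
  ⟨fun hu hw => c.valid huw (hu.trans hw.symm), fin_two_eq_of_ne_of_ne (c.valid huw)⟩

theorem exists_adj_ne_of_adj_of_adj {G : SimpleGraph V} {s p q : V} (hpq : p ≠ q)
    (hp : G.Adj s p) (hq : G.Adj s q) (t : V) : ∃ u, G.Adj s u ∧ u ≠ t := by
  by_cases hpt : p = t
  · exact ⟨q, hq, hpt ▸ hpq.symm⟩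
  · exact ⟨p, hp, hpt⟩

theorem ncard_insert_insert {S : Set V} {x y : V} (hS : S.Finite) (hx : x ∉ S) (hy : y ∉ S)
    (hxy : x ≠ y) : (insert x (insert y S)).ncard = S.ncard + 2 := by
  rw [Set.ncard_insert_of_notMem (by simp [hxy, hx]) (hS.insert y),
    Set.ncard_insert_of_notMem hy hS]

theorem ncard_insert_insert_inter_eq_ncard_sdiff {S P : Set V} {x y : V} (hS : S.Finite)
    (hx : x ∉ S) (hy : y ∉ S) (hxy : x ∈ P ↔ y ∉ P) (h : (S ∩ P).ncard = (S \ P).ncard) :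
    (insert x (insert y S) ∩ P).ncard = (insert x (insert y S) \ P).ncard := by
  by_cases hxP : x ∈ P
  · have hyP : y ∉ P := hxy.1 hxP
    rw [Set.insert_inter_of_mem hxP, Set.insert_inter_of_notMem hyP,
      Set.insert_sdiff_of_mem _ hxP, Set.insert_sdiff_of_notMem _ hyP,
      Set.ncard_insert_of_notMem (fun h => hx h.1) (hS.inter_of_left _),
      Set.ncard_insert_of_notMem (fun h => hy h.1) hS.sdiff, h]
  · have hyP : y ∈ P := not_not.1 (mt hxy.2 hxP)
    rw [Set.insert_inter_of_notMem hxP, Set.insert_inter_of_mem hyP,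
      Set.insert_sdiff_of_notMem _ hxP, Set.insert_sdiff_of_mem _ hyP,
      Set.ncard_insert_of_notMem (fun h => hy h.1) (hS.inter_of_left _),
      Set.ncard_insert_of_notMem (fun h => hx h.1) hS.sdiff, h]

theorem comap_swap_le [DecidableEq V] {G T : SimpleGraph V} {a b : V} (hTG : T ≤ G)
    (hb : ∀ u, ¬ T.Adj b u) (hab : ∀ u, T.Adj a u → G.Adj b u) :
    T.comap (Equiv.swap a b) ≤ G := by
  intro u w huw
  simp only [comap_adj, Equiv.swap_apply_def] at huw
  split_ifs at huw <;> subst_vars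
  all_goals first
    | exact absurd huw (hb _) | exact absurd huw.symm (hb _) | exact (huw.ne rfl).elim
    | exact hab _ huw | exact (hab _ huw.symm).symm | exact hTG huw

namespace IsTetragonal

variable {T B : SimpleGraph V} {S : Set V}

theorem boundary_le (h : IsTetragonal T B S) : B ≤ T := by
  induction h with
  | base => exact le_rfl
  | extend _ _ _ _ _ _ _ _ _ _ _ _ ih => exact sup_le_sup ((deleteEdges_le _).trans ih) le_rfl

theorem mem_of_adj (h : IsTetragonal T B S) {u w : V} (huw : T.Adj u w) : u ∈ S := by
  induction h generalizing u w with
  | base a b c d =>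
    simp only [fromEdgeSet_adj, Set.mem_insert_iff, Set.mem_singleton_iff, Sym2.eq_iff] at huw ⊢
    tauto
  | extend T B S a b x y h _ _ _ hab ih =>
    have ha : a ∈ S := ih (h.boundary_le hab)
    have hb : b ∈ S := ih (h.boundary_le hab.symm)
    rcases huw with huw | huw
    · exact Set.mem_insert_of_mem _ (Set.mem_insert_of_mem _ (ih huw))
    · simp only [fromEdgeSet_adj, Set.mem_insert_iff, Set.mem_singleton_iff, Sym2.eq_iff]
        at huw ⊢
      rcases huw with
        ⟨(⟨rfl, -⟩ | ⟨rfl, -⟩) | (⟨rfl, -⟩ | ⟨rfl, -⟩) | (⟨rfl, -⟩ | ⟨rfl, -⟩), -⟩ <;> tauto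

theorem mem_of_boundary_adj (h : IsTetragonal T B S) {u w : V} (huw : B.Adj u w) : w ∈ S :=
  h.mem_of_adj (h.boundary_le huw.symm)

theorem finite (h : IsTetragonal T B S) : S.Finite := by
  induction h with
  | base => exact Set.toFinite _
  | extend _ _ _ _ _ _ _ _ _ _ _ _ ih => exact (ih.insert _).insert _

theorem exists_adj_ne (h : IsTetragonal T B S) {s : V} (hs : s ∈ S) (t : V) :
    ∃ u, B.Adj s u ∧ u ≠ t := by
  induction h generalizing s t with
  | base a b c d hab hac had hbc hbd hcd =>
    simp only [Set.mem_insert_iff, Set.mem_singleton_iff] at hs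
    have hadj {p q : V} (hpq : p ≠ q)
        (hmem : s(p, q) ∈ ({s(a, b), s(b, c), s(c, d), s(d, a)} : Set _)) :
        (fromEdgeSet {s(a, b), s(b, c), s(c, d), s(d, a)}).Adj p q :=
      (fromEdgeSet_adj _).2 ⟨hmem, hpq⟩
    rcases hs with rfl | rfl | rfl | rfl
    · exact exists_adj_ne_of_adj_of_adj hbd (hadj hab (by simp)) (hadj had (by simp)) t
    · exact exists_adj_ne_of_adj_of_adj hac (hadj hab.symm (by simp)) (hadj hbc (by simp)) t
    · exact exists_adj_ne_of_adj_of_adj hbd (hadj hbc.symm (by simp)) (hadj hcd (by simp)) t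
    · exact exists_adj_ne_of_adj_of_adj hac (hadj had.symm (by simp)) (hadj hcd.symm (by simp)) t
  | extend T B S a b x y h hx hy hxy hab ih =>
    have hnew {p q : V} (hpq : p ≠ q)
        (hmem : s(p, q) ∈ ({s(a, x), s(x, y), s(y, b)} : Set _)) :
        (B.deleteEdges {s(a, b)} ⊔ fromEdgeSet {s(a, x), s(x, y), s(y, b)}).Adj p q :=
      Or.inr ((fromEdgeSet_adj _).2 ⟨hmem, hpq⟩)
    have hold {p q : V} (hpq : B.Adj p q) (hne : s(p, q) ≠ s(a, b)) :
        (B.deleteEdges {s(a, b)} ⊔ fromEdgeSet {s(a, x), s(x, y), s(y, b)}).Adj p q :=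
      Or.inl ((deleteEdges_adj ..).2 ⟨hpq, hne⟩)
    have haS : a ∈ S := h.mem_of_boundary_adj hab.symm
    have hbS : b ∈ S := h.mem_of_boundary_adj hab
    rcases hs with rfl | rfl | hs
    · exact exists_adj_ne_of_adj_of_adj (ne_of_mem_of_not_mem haS hy)
        (hnew (ne_of_mem_of_not_mem haS hx).symm (by simp [Sym2.eq_swap])) (hnew hxy (by simp)) t
    · exact exists_adj_ne_of_adj_of_adj (ne_of_mem_of_not_mem hbS hx).symm
        (hnew hxy.symm (by simp [Sym2.eq_swap]))
        (hnew (ne_of_mem_of_not_mem hbS hy).symm (by simp)) t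
    · by_cases hsa : s = a
      · subst hsa
        obtain ⟨u, hu, hub⟩ := ih hs b
        exact exists_adj_ne_of_adj_of_adj (ne_of_mem_of_not_mem (h.mem_of_boundary_adj hu) hx).symm
          (hnew (ne_of_mem_of_not_mem hs hx) (by simp)) (hold hu (by simp [hub, hab.ne])) t
      by_cases hsb : s = b
      · subst hsb
        obtain ⟨u, hu, hua⟩ := ih hs a
        exact exists_adj_ne_of_adj_of_adj (ne_of_mem_of_not_mem (h.mem_of_boundary_adj hu) hy).symm
          (hnew (ne_of_mem_of_not_mem hs hy) (by simp [Sym2.eq_swap]))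
          (hold hu (by simp [hua, hab.ne'])) t
      obtain ⟨u, hu, hut⟩ := ih hs t
      exact ⟨u, hold hu (by simp [hsa, hsb]), hut⟩

theorem comap {W : Type*} (h : IsTetragonal T B S) (e : W ≃ V) :
    IsTetragonal (T.comap e) (B.comap e) (e ⁻¹' S) := by
  induction h with
  | base a b c d hab hac had hbc hbd hcd =>
    obtain ⟨a, rfl⟩ := e.surjective a
    obtain ⟨b, rfl⟩ := e.surjective b
    obtain ⟨c, rfl⟩ := e.surjective c
    obtain ⟨d, rfl⟩ := e.surjective d
    have hG : (fromEdgeSet {s(e a, e b), s(e b, e c), s(e c, e d), s(e d, e a)}).comap e =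
        fromEdgeSet {s(a, b), s(b, c), s(c, d), s(d, a)} := by
      ext u w
      simp
    have hS : e ⁻¹' {e a, e b, e c, e d} = {a, b, c, d} := by
      ext u
      simp
    rw [hG, hS]
    exact .base a b c d (mt (congrArg e) hab) (mt (congrArg e) hac) (mt (congrArg e) had)
      (mt (congrArg e) hbc) (mt (congrArg e) hbd) (mt (congrArg e) hcd)
  | extend T B S a b x y h hx hy hxy hab ih =>
    obtain ⟨a, rfl⟩ := e.surjective a
    obtain ⟨b, rfl⟩ := e.surjective b
    obtain ⟨x, rfl⟩ := e.surjective x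
    obtain ⟨y, rfl⟩ := e.surjective y
    have hP : (fromEdgeSet {s(e a, e x), s(e x, e y), s(e y, e b)}).comap e =
        fromEdgeSet {s(a, x), s(x, y), s(y, b)} := by
      ext u w
      simp
    have hD : (B.deleteEdges {s(e a, e b)}).comap e = (B.comap e).deleteEdges {s(a, b)} := by
      ext u w
      simp
    have hS : e ⁻¹' insert (e x) (insert (e y) S) = insert x (insert y (e ⁻¹' S)) := by
      ext u
      simp
    have hsup (G H : SimpleGraph V) : (G ⊔ H).comap e = G.comap e ⊔ H.comap e := rfl
    rw [hsup, hsup, hP, hD, hS]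
    exact .extend _ _ _ a b x y ih hx hy (mt (congrArg e) hxy) hab

theorem ncard_inter_eq_ncard_sdiff (h : IsTetragonal T B S) {P : Set V}
    (hP : ∀ ⦃u w⦄, T.Adj u w → (u ∈ P ↔ w ∉ P)) : (S ∩ P).ncard = (S \ P).ncard := by
  induction h with
  | base a b c d hab hac had hbc hbd hcd =>
    have hadj {p q : V} (hpq : p ≠ q)
        (hmem : s(p, q) ∈ ({s(a, b), s(b, c), s(c, d), s(d, a)} : Set _)) : p ∈ P ↔ q ∉ P :=
      hP ((fromEdgeSet_adj _).2 ⟨hmem, hpq⟩)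
    rw [Set.singleton_def]
    refine ncard_insert_insert_inter_eq_ncard_sdiff (Set.toFinite _) (by simp [hac, had])
      (by simp [hbc, hbd]) (hadj hab (by simp)) ?_
    exact ncard_insert_insert_inter_eq_ncard_sdiff Set.finite_empty (Set.notMem_empty c)
      (Set.notMem_empty d) (hadj hcd (by simp)) (by simp)
  | extend T B S a b x y h hx hy hxy hab ih =>
    exact ncard_insert_insert_inter_eq_ncard_sdiff h.finite hx hy
      (hP (Or.inr ((fromEdgeSet_adj _).2 ⟨by simp, hxy⟩))) (ih fun u w huw => hP (Or.inl huw))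

section Ear

variable {T₀ B₀ : SimpleGraph V} {S₀ : Set V} {r f g q : V}

theorem ear_adj_left (h₀ : IsTetragonal T₀ B₀ S₀) (hrq : B₀.Adj r q) (hf : f ∉ S₀) (hfg : f ≠ g)
    {u : V} (h : (T₀ ⊔ fromEdgeSet {s(r, f), s(f, g), s(g, q)}).Adj f u) : u = r ∨ u = g := by
  have hfq : f ≠ q := (ne_of_mem_of_not_mem (h₀.mem_of_boundary_adj hrq) hf).symm
  rcases h with h | h
  · exact absurd (h₀.mem_of_adj h) hf
  · simp only [fromEdgeSet_adj, Set.mem_insert_iff, Set.mem_singleton_iff, Sym2.eq_iff] at h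
    grind

theorem ear_adj_right (h₀ : IsTetragonal T₀ B₀ S₀) (hrq : B₀.Adj r q) (hg : g ∉ S₀) (hfg : f ≠ g)
    {u : V} (h : (T₀ ⊔ fromEdgeSet {s(r, f), s(f, g), s(g, q)}).Adj g u) : u = f ∨ u = q := by
  have hgr : g ≠ r := (ne_of_mem_of_not_mem (h₀.mem_of_adj (h₀.boundary_le hrq)) hg).symm
  rcases h with h | h
  · exact absurd (h₀.mem_of_adj h) hg
  · simp only [fromEdgeSet_adj, Set.mem_insert_iff, Set.mem_singleton_iff, Sym2.eq_iff] at h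
    grind

theorem ear_eq_of_forall_adj (h₀ : IsTetragonal T₀ B₀ S₀) (hrq : B₀.Adj r q) (hf : f ∉ S₀)
    (hg : g ∉ S₀) (hfg : f ≠ g) {Q : Set V} {e : V} (hgQ : g ∈ Q) (hQ : 2 < Q.ncard)
    (he : ∀ u ∈ Q, (T₀ ⊔ fromEdgeSet {s(r, f), s(f, g), s(g, q)}).Adj u e) : e = q := by
  rcases ear_adj_right h₀ hrq hg hfg (he g hgQ) with rfl | rfl
  · have hsub : Q ⊆ {r, g} := fun u hu => ear_adj_left h₀ hrq hf hfg (he u hu).symm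
    have := (Set.ncard_le_ncard hsub).trans (Set.ncard_insert_le r {g})
    rw [Set.ncard_singleton] at this
    omega
  · rfl

end Ear

theorem exists_last_ear (h : IsTetragonal T B S) (hS : 4 < S.ncard) {P : Set V}
    (hP : ∀ ⦃u w⦄, T.Adj u w → (u ∈ P ↔ w ∉ P)) :
    ∃ (T₀ B₀ : SimpleGraph V) (S₀ : Set V) (r f g q : V), IsTetragonal T₀ B₀ S₀ ∧ B₀.Adj r q ∧
      f ∉ S₀ ∧ g ∉ S₀ ∧ f ≠ g ∧ f ∈ P ∧ T = T₀ ⊔ fromEdgeSet {s(r, f), s(f, g), s(g, q)} ∧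
      S = insert f (insert g S₀) := by
  cases h with
  | base a b c d =>
    have := Set.ncard_insert_le a {b, c, d}
    have := Set.ncard_insert_le b {c, d}
    have := Set.ncard_insert_le c {d}
    rw [Set.ncard_singleton] at *
    omega
  | extend T₀ B₀ S₀ a b x y h₀ hx hy hxy hab =>
    by_cases hxP : x ∈ P
    · exact ⟨T₀, B₀, S₀, a, x, y, b, h₀, hab, hx, hy, hxy, hxP, rfl, rfl⟩
    have hyP : y ∈ P := by
      have := hP (Or.inr ((fromEdgeSet_adj _).2 ⟨by simp, hxy⟩))
      tauto
    refine ⟨T₀, B₀, S₀, b, y, x, a, h₀, hab.symm, hy, hx, hxy.symm, hyP, ?_, Set.insert_comm _ _ _⟩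
    congr 2
    ext e
    simp only [Set.mem_insert_iff, Set.mem_singleton_iff, Sym2.eq_swap]
    tauto

end IsTetragonal

namespace IsTetragonalSubgraph

variable {G T B : SimpleGraph V} {S : Set V}

theorem extend {a b x y : V} (h : IsTetragonalSubgraph G T B S) (hab : B.Adj a b) (hx : x ∉ S)
    (hy : y ∉ S) (hax : G.Adj a x) (hxy : G.Adj x y) (hyb : G.Adj y b) :
    IsTetragonalSubgraph G (T ⊔ fromEdgeSet {s(a, x), s(x, y), s(y, b)})
      (B.deleteEdges {s(a, b)} ⊔ fromEdgeSet {s(a, x), s(x, y), s(y, b)})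
      (insert x (insert y S)) := by
  refine ⟨.extend _ _ _ a b x y h.1 hx hy hxy.ne hab, sup_le h.2 ((fromEdgeSet_le _).2 ?_)⟩
  rintro e ⟨he | he | he, -⟩ <;> subst he
  exacts [hax, hxy, hyb]

theorem swap [DecidableEq V] (h : IsTetragonalSubgraph G T B S) {a b : V} (hb : b ∉ S)
    (hab : ∀ u, T.Adj a u → G.Adj b u) :
    IsTetragonalSubgraph G (T.comap (Equiv.swap a b)) (B.comap (Equiv.swap a b))
      (Equiv.swap a b ⁻¹' S) :=
  ⟨h.1.comap _, comap_swap_le h.2 (fun _ hbu => hb (h.1.mem_of_adj hbu)) hab⟩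

theorem ncard_color_class (h : IsTetragonalSubgraph G T B S) (c : G.Coloring (Fin 2)) {m : ℕ}
    (hcard : S.ncard = 2 * m) (i : Fin 2) :
    {u ∈ S | c u = i}.ncard = m ∧ {u ∈ S | c u ≠ i}.ncard = m := by
  have hbal : (S ∩ {u | c u = i}).ncard = (S \ {u | c u = i}).ncard :=
    h.1.ncard_inter_eq_ncard_sdiff fun _ _ huw => coloring_eq_iff_ne_of_adj c (h.2 huw) i
  have hsum := Set.ncard_inter_add_ncard_sdiff_eq_ncard S {u | c u = i} h.1.finite
  exact ⟨show (S ∩ {u | c u = i}).ncard = m by omega,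
    show (S \ {u | c u = i}).ncard = m by omega⟩

theorem exists_forall_adj_of_le_ncard [Finite V] (h : IsTetragonalSubgraph G T B S)
    (c : G.Coloring (Fin 2)) {m : ℕ} (hcard : S.ncard = 2 * m) {v w : V} (hvw : G.Adj v w)
    (hw : m - 1 ≤ (G.neighborSet w ∩ S).ncard) :
    ∃ e, ∀ u ∈ S, c u = c v → u ≠ e → G.Adj w u := by
  have : Nonempty V := ⟨v⟩
  set A := {u ∈ S | c u = c v}
  have hA : A.ncard = m := (h.ncard_color_class c hcard (c v)).1
  have hsub : G.neighborSet w ∩ S ⊆ A ∩ G.neighborSet w := fun u ⟨hwu, hu⟩ =>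
    ⟨⟨hu, fin_two_eq_of_ne_of_ne (c.valid hwu).symm (c.valid hvw).symm⟩, hwu⟩
  have hsum := Set.ncard_inter_add_ncard_sdiff_eq_ncard A (G.neighborSet w)
  have hle := Set.ncard_le_ncard hsub
  obtain ⟨e, he⟩ := (Set.ncard_le_one_iff_subset_singleton (s := A \ G.neighborSet w)).1
    (by omega)
  exact ⟨e, fun u hu hcu hue => by_contra fun hwu => hue (he ⟨⟨hu, hcu⟩, hwu⟩)⟩

end IsTetragonalSubgraph

namespace IsOptimalTetragonal

variable {G T B : SimpleGraph V} {S : Set V}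

theorem ncard_add_two_le (hopt : IsOptimalTetragonal G T B S) {T' B' : SimpleGraph V}
    {S' : Set V} (h : IsTetragonalSubgraph G T' B' S') {a b x y : V} (hab : B'.Adj a b)
    (hx : x ∉ S') (hy : y ∉ S') (hax : G.Adj a x) (hxy : G.Adj x y) (hyb : G.Adj y b) :
    S'.ncard + 2 ≤ S.ncard := by
  have := hopt.2.1 _ _ _ (h.extend hab hx hy hax hxy hyb)
  rwa [ncard_insert_insert h.1.finite hx hy hxy.ne] at this

theorem ncard_add_four_le (hopt : IsOptimalTetragonal G T B S) {T' B' : SimpleGraph V}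
    {S' : Set V} (h : IsTetragonalSubgraph G T' B' S') {r t f w₁ v w₂ : V} (hrt : B'.Adj r t)
    (hf : f ∉ S') (hw₁ : w₁ ∉ S') (hv : v ∉ insert f (insert w₁ S'))
    (hw₂ : w₂ ∉ insert f (insert w₁ S')) (hrf : G.Adj r f) (hfw₁ : G.Adj f w₁)
    (hw₁t : G.Adj w₁ t) (hw₁v : G.Adj w₁ v) (hvw₂ : G.Adj v w₂) (hw₂t : G.Adj w₂ t) :
    S'.ncard + 4 ≤ S.ncard := by
  have hB : (B'.deleteEdges {s(r, t)} ⊔ fromEdgeSet {s(r, f), s(f, w₁), s(w₁, t)}).Adj w₁ t :=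
    Or.inr ((fromEdgeSet_adj _).2 ⟨by simp, hw₁t.ne⟩)
  have := hopt.ncard_add_two_le (h.extend hrt hf hw₁ hrf hfw₁ hw₁t) hB hv hw₂ hw₁v hvw₂ hw₂t
  rw [ncard_insert_insert h.1.finite hf hw₁ hfw₁.ne] at this
  omega

theorem not_adj_of_adj_of_le_ncard [Finite V] (hopt : IsOptimalTetragonal G T B S)
    (c : G.Coloring (Fin 2)) {m : ℕ} (hcard : S.ncard = 2 * m) {v w s : V} (hv : v ∉ S)
    (hw : w ∉ S) (hvw : G.Adj v w) (hwdeg : m - 1 ≤ (G.neighborSet w ∩ S).ncard) (hs : s ∈ S) :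
    ¬ G.Adj v s := by
  intro hvs
  obtain ⟨hT, hTG⟩ := hopt.1
  obtain ⟨e, he⟩ := hopt.1.exists_forall_adj_of_le_ncard c hcard hvw hwdeg
  obtain ⟨z, hsz, hze⟩ := hT.exists_adj_ne hs e
  have hcz : c z = c v :=
    fin_two_eq_of_ne_of_ne (c.valid (hTG (hT.boundary_le hsz))).symm (c.valid hvs).symm
  have := hopt.ncard_add_two_le hopt.1 hsz hv hw hvs.symm hvw
    (he z (hT.mem_of_boundary_adj hsz) hcz hze)
  omega

theorem forall_adj_of_forall_adj_ne (hopt : IsOptimalTetragonal G T B S)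
    (c : G.Coloring (Fin 2)) {v w₁ w₂ e₁ e₂ : V} (hv : v ∉ S) (hw₁ : w₁ ∉ S) (hw₂ : w₂ ∉ S)
    (h₁₂ : w₁ ≠ w₂) (hvw₁ : G.Adj v w₁) (hvw₂ : G.Adj v w₂)
    (he₁ : ∀ u ∈ S, c u = c v → u ≠ e₁ → G.Adj w₁ u)
    (he₂ : ∀ u ∈ S, c u = c v → u ≠ e₂ → G.Adj w₂ u) :
    ∀ a ∈ S, c a ≠ c v → T.Adj a e₁ := by
  classical
  intro a ha hca
  obtain ⟨hT, hTG⟩ := hopt.1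
  have hcolor {u : V} (hau : T.Adj a u) : c u = c v :=
    fin_two_eq_of_ne_of_ne (c.valid (hTG hau)).symm hca
  by_contra hae
  have hcov (u : V) (hau : T.Adj a u) : G.Adj w₁ u :=
    he₁ u (hT.mem_of_adj hau.symm) (hcolor hau) fun hue => hae (hue ▸ hau)
  have hσS {u : V} (hu : u ∉ S) (hw₁u : u ≠ w₁) : u ∉ Equiv.swap a w₁ ⁻¹' S := by
    simpa [Equiv.swap_apply_of_ne_of_ne (ne_of_mem_of_not_mem ha hu).symm hw₁u] using hu
  obtain ⟨z, haz, hze⟩ := hT.exists_adj_ne ha e₂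
  have hzS := hT.mem_of_boundary_adj haz
  have hB : (B.comap (Equiv.swap a w₁)).Adj w₁ z := by
    rw [comap_adj, Equiv.swap_apply_right,
      Equiv.swap_apply_of_ne_of_ne haz.ne' (ne_of_mem_of_not_mem hzS hw₁)]
    exact haz
  have := hopt.ncard_add_two_le (hopt.1.swap hw₁ hcov) hB (hσS hv hvw₁.ne) (hσS hw₂ h₁₂.symm)
    hvw₁.symm hvw₂ (he₂ z hzS (hcolor (hT.boundary_le haz)) hze)
  rw [Set.ncard_preimage_of_injective_subset_range (Equiv.injective _) (by simp)] at this
  omega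

theorem false_of_adj_of_adj_of_le_ncard [Finite V] (hopt : IsOptimalTetragonal G T B S)
    (c : G.Coloring (Fin 2)) {m : ℕ} (hcard : S.ncard = 2 * m) (hm : 3 ≤ m) {v w₁ w₂ : V}
    (hv : v ∉ S) (hw₁ : w₁ ∉ S) (hw₂ : w₂ ∉ S) (h₁₂ : w₁ ≠ w₂) (hvw₁ : G.Adj v w₁)
    (hvw₂ : G.Adj v w₂) (hdeg₁ : m - 1 ≤ (G.neighborSet w₁ ∩ S).ncard)
    (hdeg₂ : m - 1 ≤ (G.neighborSet w₂ ∩ S).ncard) : False := by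
  obtain ⟨e₁, he₁⟩ := hopt.1.exists_forall_adj_of_le_ncard c hcard hvw₁ hdeg₁
  obtain ⟨e₂, he₂⟩ := hopt.1.exists_forall_adj_of_le_ncard c hcard hvw₂ hdeg₂
  have hstar₁ := hopt.forall_adj_of_forall_adj_ne c hv hw₁ hw₂ h₁₂ hvw₁ hvw₂ he₁ he₂
  have hstar₂ := hopt.forall_adj_of_forall_adj_ne c hv hw₂ hw₁ h₁₂.symm hvw₂ hvw₁ he₂ he₁
  have hQ : {u ∈ S | c u ≠ c v}.ncard = m := (hopt.1.ncard_color_class c hcard (c v)).2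
  obtain ⟨T₀, B₀, S₀, r, f, g, q, h₀, hrq, hf, hg, hfg, hcf, rfl, rfl⟩ :=
    hopt.1.1.exists_last_ear (P := {u | c u = c v}) (by omega)
      fun _ _ huw => coloring_eq_iff_ne_of_adj c (hopt.1.2 huw) (c v)
  have hTG := hopt.1.2
  have hS₀ {u : V} (hu : u ∈ S₀) : u ∈ insert f (insert g S₀) :=
    Set.mem_insert_of_mem _ (Set.mem_insert_of_mem _ hu)
  have hrS₀ : r ∈ S₀ := h₀.mem_of_adj (h₀.boundary_le hrq)
  have hGrf : G.Adj r f :=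
    hTG (Or.inr ((fromEdgeSet_adj _).2 ⟨by simp, ne_of_mem_of_not_mem hrS₀ hf⟩))
  have hGfg : G.Adj f g := hTG (Or.inr ((fromEdgeSet_adj _).2 ⟨by simp, hfg⟩))
  have heq {e : V} (he : ∀ a ∈ insert f (insert g S₀), c a ≠ c v →
      (T₀ ⊔ fromEdgeSet {s(r, f), s(f, g), s(g, q)}).Adj a e) : e = q :=
    h₀.ear_eq_of_forall_adj hrq hf hg hfg (Q := {u ∈ insert f (insert g S₀) | c u ≠ c v})
      ⟨Set.mem_insert_of_mem _ (Set.mem_insert _ _), hcf ▸ (c.valid hGfg).symm⟩ (by omega)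
      fun u hu => he u hu.1 hu.2
  rw [heq hstar₁] at he₁
  rw [heq hstar₂] at he₂
  obtain ⟨t, hrt, htq⟩ := h₀.exists_adj_ne hrS₀ q
  have ht : t ∈ insert f (insert g S₀) := hS₀ (h₀.mem_of_boundary_adj hrt)
  have hct : c t = c v := fin_two_eq_of_ne_of_ne
    (c.valid (hTG (Or.inl (h₀.boundary_le hrt)))).symm (hcf ▸ c.valid hGrf)
  have hout {u : V} (hu : u ∉ insert f (insert g S₀)) (huw₁ : u ≠ w₁) :
      u ∉ insert f (insert w₁ S₀) := by
    simp only [Set.mem_insert_iff, not_or] at hu ⊢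
    exact ⟨hu.1, huw₁, hu.2.2⟩
  have hfq : f ≠ q := (ne_of_mem_of_not_mem (h₀.mem_of_boundary_adj hrq) hf).symm
  have := hopt.ncard_add_four_le ⟨h₀, le_sup_left.trans hTG⟩ hrt hf (fun h => hw₁ (hS₀ h))
    (hout hv hvw₁.ne) (hout hw₂ h₁₂.symm) hGrf (he₁ f (Set.mem_insert _ _) hcf hfq).symm
    (he₁ t ht hct htq) hvw₁.symm hvw₂ (he₂ t ht hct htq)
  rw [ncard_insert_insert h₀.finite hf hg hfg] at hcard this
  omega

end IsOptimalTetragonal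

/-- Lemma 3.7 (4): vertices outside `V(T) ∪ R` satisfy exactly one of two degree conditions. -/
theorem optimal_tetragonal_outside {V : Type*} [Fintype V]
    (G T B : SimpleGraph V) (S : Set V) (m : ℕ)
    (hbip : G.Colorable 2) (hopt : IsOptimalTetragonal G T B S)
    (hcard : S.ncard = 2 * m) (hm : 3 ≤ m) :
    ∀ v : V, v ∉ S → ¬ (m - 1 ≤ (G.neighborSet v ∩ S).ncard) →
      Xor'
        ((G.neighborSet v ∩ {w : V | w ∉ S ∧ m - 1 ≤ (G.neighborSet w ∩ S).ncard}).ncard = 0 ∧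
          (G.neighborSet v ∩ S).ncard ≤ m - 2)
        ((G.neighborSet v ∩ {w : V | w ∉ S ∧ m - 1 ≤ (G.neighborSet w ∩ S).ncard}).ncard = 1 ∧
          (G.neighborSet v ∩ S).ncard = 0) := by
  intro v hv hvdeg
  obtain ⟨c⟩ := hbip
  set R := {w : V | w ∉ S ∧ m - 1 ≤ (G.neighborSet w ∩ S).ncard}
  have hR : (G.neighborSet v ∩ R).ncard ≤ 1 :=
    (Set.ncard_le_one_iff (Set.toFinite _)).2 fun ⟨hvw₁, hw₁, hdeg₁⟩ ⟨hvw₂, hw₂, hdeg₂⟩ =>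
      by_contra fun h₁₂ =>
        hopt.false_of_adj_of_adj_of_le_ncard c hcard hm hv hw₁ hw₂ h₁₂ hvw₁ hvw₂ hdeg₁ hdeg₂
  have hS (hR : (G.neighborSet v ∩ R).Nonempty) : (G.neighborSet v ∩ S).ncard = 0 := by
    obtain ⟨w, hvw, hw, hdeg⟩ := hR
    refine (Set.ncard_eq_zero (Set.toFinite _)).2 (Set.eq_empty_of_forall_notMem ?_)
    exact fun s ⟨hvs, hs⟩ => hopt.not_adj_of_adj_of_le_ncard c hcard hv hw hvw hdeg hs hvs
  rcases Nat.le_one_iff_eq_zero_or_eq_one.1 hR with h₀ | h₁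
  · exact Or.inl ⟨⟨h₀, by omega⟩, fun h => by omega⟩
  · exact Or.inr ⟨⟨h₁, hS (Set.nonempty_of_ncard_ne_zero (by omega))⟩, fun h => by omega⟩

end Dean
end

section
/- Let G be a finite simple 2-connected graph and let X, Y be a partition of the vertex set of G with |X| ≥ 2 and |Y| ≥ 2. Then for every vertex x ∈ X that has a neighbor in Y, there exist two vertex-disjoint edges of G, each having one endpoint in X and the other endpoint in Y, such that one of them is incident to x. -/
open SimpleGraph

namespace Dean

variable {V : Type*}

private lemma walk_cross {W : Type*} {H : SimpleGraph W} {P : W → Prop} :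
    ∀ {a b : W}, H.Walk a b → P a → ¬P b →
      ∃ u w, P u ∧ ¬P w ∧ H.Adj u w := by
  intro a b p
  induction p with
  | nil => intro pa pb; exact absurd pa pb
  | @cons a c b h p ih =>
    intro pa pb
    by_cases hc : P c
    · exact ih hc pb
    · exact ⟨_, _, pa, hc, h⟩

/-- If `G.induce S` is connected and it contains a vertex in `A` and one outside `A`,
then there is an edge of `G` inside `S` crossing `A`. -/
private lemma induce_cross {V : Type*} (G : SimpleGraph V) (S A : Set V)
    (hconn : (G.induce S).Connected) (a b : V) (haS : a ∈ S) (hbS : b ∈ S)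
    (ha : a ∈ A) (hb : b ∉ A) :
    ∃ u w : V, u ∈ S ∧ w ∈ S ∧ u ∈ A ∧ w ∉ A ∧ G.Adj u w := by
  obtain ⟨p⟩ := hconn.preconnected ⟨a, haS⟩ ⟨b, hbS⟩
  obtain ⟨u, w, hu, hw, hadj⟩ :=
    walk_cross (P := fun v : S => (v : V) ∈ A) p ha hb
  exact ⟨u, w, u.2, w.2, hu, hw, hadj⟩

/-- Lemma 4.7: a strengthened form of Menger's theorem for 2-connected graphs. -/
theorem menger_extended {V : Type*} [Fintype V] (G : SimpleGraph V)
    (h2 : IsTwoConnected G) (X Y : Set V)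
    (hcover : X ∪ Y = Set.univ) (hdisj : Disjoint X Y)
    (hX : 2 ≤ X.ncard) (hY : 2 ≤ Y.ncard)
    (x : V) (hx : x ∈ X) (hxY : ∃ y ∈ Y, G.Adj x y) :
    ∃ y₁ u w : V, y₁ ∈ Y ∧ u ∈ X ∧ w ∈ Y ∧
      G.Adj x y₁ ∧ G.Adj u w ∧ u ≠ x ∧ w ≠ y₁ := by
  obtain ⟨y, hyY, hxy⟩ := hxY
  have hYX : ∀ {v}, v ∈ Y → v ∉ X := fun hv hvX => hdisj.ne_of_mem hvX hv rfl
  have hXY : ∀ {v}, v ∉ X → v ∈ Y := by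
    intro v hv
    have : v ∈ X ∪ Y := hcover ▸ Set.mem_univ v
    exact this.resolve_left hv
  have hyx : y ≠ x := fun h => hYX hyY (h ▸ hx)
  -- a vertex of X different from x
  obtain ⟨x₁, x₂, hx₁, hx₂, hne⟩ :=
    (Set.one_lt_ncard_iff (Set.toFinite X)).mp hX
  have hx' : ∃ x' ∈ X, x' ≠ x := by
    rcases eq_or_ne x₁ x with h | h
    · exact ⟨x₂, hx₂, h ▸ hne.symm⟩
    · exact ⟨x₁, hx₁, h⟩
  obtain ⟨x', hx'X, hx'x⟩ := hx'
  -- a vertex of Y different from y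
  obtain ⟨y₁', y₂', hy₁, hy₂, hne'⟩ :=
    (Set.one_lt_ncard_iff (Set.toFinite Y)).mp hY
  have hy' : ∃ y' ∈ Y, y' ≠ y := by
    rcases eq_or_ne y₁' y with h | h
    · exact ⟨y₂', hy₂, h ▸ hne'.symm⟩
    · exact ⟨y₁', hy₁, h⟩
  obtain ⟨y', hy'Y, hy'y⟩ := hy'
  -- crossing edge in G - x : from X \ {x} to Y
  obtain ⟨u, w, huS, hwS, huX, hwX, huw⟩ :=
    induce_cross G ({x}ᶜ : Set V) X (h2.2 x) x' y hx'x hyx hx'X (hYX hyY)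
  have hwY : w ∈ Y := hXY hwX
  have hux : u ≠ x := huS
  -- crossing edge in G - y : from X to Y \ {y}
  have hxny : x ∈ ({y}ᶜ : Set V) := fun h => hyx h.symm
  obtain ⟨u', w', hu'S, hw'S, hu'X, hw'X, hu'w'⟩ :=
    induce_cross G ({y}ᶜ : Set V) X (h2.2 y) x y' hxny hy'y hx (hYX hy'Y)
  have hw'Y : w' ∈ Y := hXY hw'X
  have hw'y : w' ≠ y := hw'S
  rcases eq_or_ne u' x with h | h
  · -- x is adjacent to w' ≠ y; x has two Y-neighbours y and w'
    have hxw' : G.Adj x w' := h ▸ hu'w'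
    rcases eq_or_ne w y with hwy | hwy
    · exact ⟨w', u, w, hw'Y, huX, hwY, hxw', huw, hux, by
        rw [hwy]; exact hw'y.symm⟩
    · exact ⟨y, u, w, hyY, huX, hwY, hxy, huw, hux, hwy⟩
  · exact ⟨y, u', w', hyY, hu'X, hw'Y, hxy, hu'w', h, hw'y⟩

end Dean
end
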